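/- arXiv:0812.2685 — 2 statements merged into one kernel-verified Lean document; each statement's English description precedes it below -/
import Mathlib

section
/- Let f: ℝ → ℝ be smooth with averaged speed a(u,v) := ∫₀¹ f'(su + (1-s)v) ds. Suppose u₊ < u' < u₋ (so u'-u₋ and u'-u₊ have opposite signs) and the shock (u₋,u₊) satisfies Oleinik's entropy condition: (f(v) - f(u₋))/(v - u₋) ≥ (f(u₊) - f(u₋))/(u₊ - u₋) for all v strictly between u₋ and u₊. Then a(u₋,u') ≥ a(u₊,u'); in particular the jump in the averaged speed is not a rarefaction-shock (i.e., it is false that a(u₋,u') < a(u₋,u₊) < a(u₊,u')). -/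
/-!
On `s ↦ s u + (1 - s) v` the integrand is the derivative of `f` along the segment, so the
averaged speed `a u v` is the chord slope of `f` between `v` and `u`. Oleinik's condition at
`v = u'` says that `(u', f u')` lies on or below the chord from `u₊` to `u₋`; for a point below a
chord, the slope on the left piece is at most the slope on the right piece, i.e.
`a u₊ u' ≤ a u₋ u'`.
-/

theorem integral_deriv_segment_eq_slope {E : Type*} [NormedAddCommGroup E] [NormedSpace ℝ E]
    [CompleteSpace E] {f : ℝ → E} (hf : ContDiff ℝ 1 f) {u v : ℝ} (huv : u ≠ v) :
    ∫ s in (0:ℝ)..1, deriv f (s * u + (1 - s) * v) = slope f v u := by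
  have hline : ∀ s : ℝ, s * u + (1 - s) * v = (u - v) * s + v := fun s => by ring
  simp_rw [hline]
  rw [intervalIntegral.integral_comp_mul_add _ (sub_ne_zero.2 huv), mul_zero, zero_add, mul_one,
    sub_add_cancel, intervalIntegral.integral_deriv_eq_sub
      (fun x _ => (hf.differentiable one_ne_zero).differentiableAt)
      ((hf.continuous_deriv le_rfl).intervalIntegrable _ _), slope_def_module]

theorem slope_le_slope_of_slope_le_slope_right {f : ℝ → ℝ} {a b c : ℝ} (hac : a < c)
    (hcb : c < b) (h : slope f a b ≤ slope f c b) : slope f a c ≤ slope f c b := by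
  simp only [slope_def_field] at *
  rw [div_le_div_iff₀ (by linarith) (by linarith)] at *
  nlinarith

/-- if `u₊ < u' < u₋` and the shock `(u₋,u₊)` satisfies Oleinik's
entropy condition, then `a u₋ u' ≥ a u₊ u'`; in particular the jump in the averaged
speed is not a rarefaction-shock. -/
theorem oleinik_no_rarefaction_shock
    (f : ℝ → ℝ) (hf : ContDiff ℝ 1 f)
    (a : ℝ → ℝ → ℝ)
    (ha : ∀ u v : ℝ, a u v = ∫ s in (0:ℝ)..1, deriv f (s * u + (1 - s) * v))
    (um up u' : ℝ) (h1 : up < u') (h2 : u' < um)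
    (oleinik : ∀ v : ℝ, up < v → v < um →
      (f v - f um) / (v - um) ≥ (f up - f um) / (up - um)) :
    a um u' ≥ a up u' ∧ ¬ (a um u' < a um up ∧ a um up < a up u') := by
  have ha_slope : ∀ u, u ≠ u' → a u u' = slope f u' u := fun u hu =>
    (ha u u').trans (integral_deriv_segment_eq_slope hf hu)
  have hchord : slope f up um ≤ slope f u' um := by
    rw [slope_comm, slope_comm f u']
    simpa only [← slope_def_field] using oleinik u' h1 h2
  have hspeed : a up u' ≤ a um u' := by
    rw [ha_slope up h1.ne, ha_slope um h2.ne', slope_comm]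
    exact slope_le_slope_of_slope_le_slope_right h1 h2 hchord
  exact ⟨hspeed, fun ⟨hleft, hright⟩ => (hleft.trans hright).not_ge hspeed⟩
end

section
/- Let p be strictly decreasing on an interval with c(v,v') := sqrt(-(p(v)-p(v'))/(v-v')). Suppose v' lies strictly between v₋ and v₊ and the 2-shock (v₋,v₊) satisfies Wendroff's entropy criterion: c(v,v₋) ≥ c(v₋,v₊) for all v strictly between v₋ and v₊. Then it is not the case that c(v₋,v') < c(v₋,v₊) < c(v₊,v'); i.e., the entropy-admissible 2-shock cannot be a rarefaction-shock of the averaged matrix. -/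
lemma averaged_speed_comm {p : ℝ → ℝ} {c : ℝ → ℝ → ℝ}
    (hc : ∀ v w : ℝ, v ≠ w → c v w = Real.sqrt (-((p v - p w) / (v - w))))
    {v w : ℝ} (hvw : v ≠ w) : c v w = c w v := by
  rw [hc v w hvw, hc w v hvw.symm, ← neg_sub (p w), ← neg_sub w, neg_div_neg_eq]

theorem wendroff_no_rarefaction_shock_general
    (p : ℝ → ℝ)
    (c : ℝ → ℝ → ℝ)
    (hc : ∀ v w : ℝ, v ≠ w → c v w = Real.sqrt (-((p v - p w) / (v - w))))
    (vm vp v' : ℝ)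
    (hbetween : (vm < v' ∧ v' < vp) ∨ (vp < v' ∧ v' < vm))
    (wendroff : ∀ v : ℝ, ((vm < v ∧ v < vp) ∨ (vp < v ∧ v < vm)) →
      c v vm ≥ c vm vp) :
    ¬ (c vm v' < c vm vp ∧ c vm vp < c vp v') := by
  rintro ⟨hslower, -⟩
  have hne : v' ≠ vm := by
    rcases hbetween with ⟨h, -⟩ | ⟨-, h⟩
    exacts [h.ne', h.ne]
  have hadmissible := wendroff v' hbetween
  rw [averaged_speed_comm hc hne] at hadmissible
  exact hslower.not_ge hadmissible

/-- a 2-shock of the p-system satisfying Wendroff's entropy criterion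
cannot be a rarefaction-shock of the averaged matrix. -/
theorem wendroff_no_rarefaction_shock
    (p : ℝ → ℝ)
    (I : Set ℝ) (hI : I.OrdConnected) (hp : StrictAntiOn p I)
    (c : ℝ → ℝ → ℝ)
    (hc : ∀ v w : ℝ, v ≠ w → c v w = Real.sqrt (-((p v - p w) / (v - w))))
    (vm vp v' : ℝ) (hvm : vm ∈ I) (hvp : vp ∈ I) (hv' : v' ∈ I)
    (hbetween : (vm < v' ∧ v' < vp) ∨ (vp < v' ∧ v' < vm))
    (wendroff : ∀ v : ℝ, ((vm < v ∧ v < vp) ∨ (vp < v ∧ v < vm)) →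
      c v vm ≥ c vm vp) :
    ¬ (c vm v' < c vm vp ∧ c vm vp < c vp v') :=
  wendroff_no_rarefaction_shock_general p c hc vm vp v' hbetween wendroff
end
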